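/- Window-restriction lemma: let \(r_0 = 0\) and \(r_{n+1} = \inf\{t > r_n : Z_t^{\mathcal{A}} = \min_{0 \le s \le t} Z_s^{\mathcal{A}} \text{ for all } \mathcal{A} \in \mathcal{P}\}\), and let \(r(t) = \max\{r_n : r_n \le t\}\). Then for any function \(G : \mathbb{R}^{\mathcal{P}} \to \mathbb{R}\) that is nondecreasing in each coordinate and any threshold \(b\), \(\inf\{t \ge 0 : \max_{0 \le s \le t} G((Z_t^{\mathcal{A}} - Z_s^{\mathcal{A}})_{\mathcal{A}}) \ge b\} = \inf\{t \ge 0 : \max_{r(t) \le s \le t} G((Z_t^{\mathcal{A}} - Z_s^{\mathcal{A}})_{\mathcal{A}}) \ge b\}\). -/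

import Mathlib

/-- Window-restriction lemma: with `r(t)` the latest regeneration time up to `t`
(a regeneration time being a time `u` at which `Z_u^A = min_{0 ≤ s ≤ u} Z_s^A` for every
`A ∈ 𝒫`; `u = 0` always qualifies since `Z_0^A = 0`), for any function `G` that is
nondecreasing in each coordinate and any threshold `b`, the first time that
`max_{0 ≤ s ≤ t} G((Z_t^A - Z_s^A)_A) ≥ b` equals the first time that
`max_{r(t) ≤ s ≤ t} G((Z_t^A - Z_s^A)_A) ≥ b`. -/
theorem window_restriction {ι : Type*} [Fintype ι] [Nonempty ι]
    (Z : ι → ℕ → ℝ) (hZ0 : ∀ A : ι, Z A 0 = 0)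
    (G : (ι → ℝ) → ℝ) (hG : Monotone G) (b : ℝ)
    (rt : ℕ → ℕ)
    (hrt : ∀ t : ℕ, rt t = sSup {u : ℕ | u ≤ t ∧ ∀ A : ι,
      Z A u = (Finset.range (u + 1)).inf' Finset.nonempty_range_add_one (Z A)}) :
    sInf {t : ℕ | b ≤ sSup ((fun s => G (fun A => Z A t - Z A s)) '' Set.Icc 0 t)} =
      sInf {t : ℕ | b ≤ sSup ((fun s => G (fun A => Z A t - Z A s)) '' Set.Icc (rt t) t)} := by
  have key : ∀ t : ℕ, sSup ((fun s => G (fun A => Z A t - Z A s)) '' Set.Icc 0 t)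
      = sSup ((fun s => G (fun A => Z A t - Z A s)) '' Set.Icc (rt t) t) := by
    intro t
    have h0 : (0 : ℕ) ∈ {u : ℕ | u ≤ t ∧ ∀ A : ι,
        Z A u = (Finset.range (u + 1)).inf' Finset.nonempty_range_add_one (Z A)} := by
      refine ⟨Nat.zero_le t, fun A => ?_⟩
      simp [hZ0 A]
    have hmem : rt t ∈ {u : ℕ | u ≤ t ∧ ∀ A : ι,
        Z A u = (Finset.range (u + 1)).inf' Finset.nonempty_range_add_one (Z A)} := by
      rw [hrt t]
      exact Nat.sSup_mem ⟨0, h0⟩ ⟨t, fun u hu => hu.1⟩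
    have hle : rt t ≤ t := hmem.1
    have hfin1 : ((fun s => G (fun A => Z A t - Z A s)) '' Set.Icc 0 t).Finite :=
      (Set.finite_Icc 0 t).image _
    have hfin2 : ((fun s => G (fun A => Z A t - Z A s)) '' Set.Icc (rt t) t).Finite :=
      (Set.finite_Icc _ t).image _
    apply le_antisymm
    · refine csSup_le ⟨_, ⟨0, ⟨le_rfl, Nat.zero_le t⟩, rfl⟩⟩ ?_
      rintro x ⟨s, hs, rfl⟩
      by_cases hsr : rt t ≤ s
      · exact le_csSup hfin2.bddAbove ⟨s, ⟨hsr, hs.2⟩, rfl⟩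
      · push_neg at hsr
        have hZle : ∀ A, Z A (rt t) ≤ Z A s := by
          intro A
          rw [hmem.2 A]
          exact Finset.inf'_le _ (Finset.mem_range.2 (by omega))
        have hGle : G (fun A => Z A t - Z A s) ≤ G (fun A => Z A t - Z A (rt t)) :=
          hG fun A => by linarith [hZle A]
        exact hGle.trans (le_csSup hfin2.bddAbove ⟨rt t, ⟨le_rfl, hle⟩, rfl⟩)
    · exact csSup_le_csSup hfin1.bddAbove ⟨_, ⟨rt t, ⟨le_rfl, hle⟩, rfl⟩⟩
        (Set.image_mono (Set.Icc_subset_Icc_left (Nat.zero_le _)))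
  congr 1
  ext t
  rw [Set.mem_setOf_eq, Set.mem_setOf_eq, key t]
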